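/- Let N ≥ 2, a ∈ ℝ, K ∈ ℝ, and define ω_{a,K}(y) = e^{K y^1} y^1 |y|^{-N/2} |log|y||^a on {y ∈ ℝ^N_+ : 0 < |y| < 1}. Then with L_y = -Δ - (N²/4)|y|^{-2} + a(a-1)|y|^{-2}|log|y||^{-2}, one has L_y ω_{a,K} = -(2K/y^1) ω_{a,K} + 2K (N/2 + a|log|y||^{-1}) (y^1/|y|²) ω_{a,K} - K² ω_{a,K}. -/

import Mathlib

open MeasureTheory Real Filter

noncomputable section

/-- The Euclidean Laplacian `Δu(x) = ∑ᵢ ∂²u/∂(xⁱ)²`. -/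
def lap {N : ℕ} (u : EuclideanSpace ℝ (Fin N) → ℝ)
    (x : EuclideanSpace ℝ (Fin N)) : ℝ :=
  ∑ i, fderiv ℝ (fun y => fderiv ℝ u y (EuclideanSpace.single i 1)) x
    (EuclideanSpace.single i 1)

/-- `ω_{a,K}(y) = e^{K y¹} y¹ |y|^{-N/2} |log |y||^a`. -/
def omegaAK {N : ℕ} (hN : 2 ≤ N) (a K : ℝ) (y : EuclideanSpace ℝ (Fin N)) : ℝ :=
  Real.exp (K * y ⟨0, by omega⟩) * (y ⟨0, by omega⟩ * ‖y‖ ^ (-(N : ℝ)/2) * |Real.log ‖y‖| ^ a)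


/-!
Near `y` the function `ω_{a,K}` factors as `A(y¹) Φ(|y|²)` with `A(t) = e^{Kt} t` and
`Φ(s) = s^{-N/4} (-log s / 2)^a`. For such a product the second-order chain and product rules,
summed over an orthonormal basis, give
`Δ(A(y¹) Φ(|y|²)) = A'' Φ + 4 y¹ A' Φ' + A (4 |y|² Φ'' + 2 N Φ')`.
Writing `Φ' = Φ φ` with the logarithmic derivative `φ(s) = -N/(4s) + a/(s log s)`, both sides of
the claimed identity become `e^{Ky¹} Φ(|y|²)` times rational functions of `y¹`, `|y|` and `log |y|`.
-/

open scoped RealInnerProductSpace Topology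

section ProductRule

variable {E : Type*} [NormedAddCommGroup E] [InnerProductSpace ℝ E] {e : E}
  {f f' g g' : ℝ → ℝ}

theorem hasFDerivAt_mul_comp_inner_comp_normSq {z : E}
    (hf : HasDerivAt f (f' ⟪e, z⟫) ⟪e, z⟫) (hg : HasDerivAt g (g' (‖z‖ ^ 2)) (‖z‖ ^ 2)) :
    HasFDerivAt (fun w => f ⟪e, w⟫ * g (‖w‖ ^ 2))
      ((f' ⟪e, z⟫ * g (‖z‖ ^ 2)) • innerSL ℝ e
        + (2 * f ⟪e, z⟫ * g' (‖z‖ ^ 2)) • innerSL ℝ z) z := by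
  have hinner : HasFDerivAt (fun w => ⟪e, w⟫) (innerSL ℝ e) z := (innerSL ℝ e).hasFDerivAt
  refine ((hf.comp_hasFDerivAt z hinner).mul
    (hg.comp_hasFDerivAt z (hasStrictFDerivAt_norm_sq z).hasFDerivAt)).congr_fderiv ?_
  ext v
  simp only [Function.comp_apply, add_apply, smul_apply, coe_innerSL_apply, nsmul_eq_mul,
    Nat.cast_ofNat, smul_eq_mul]
  ring

theorem fderiv_fderiv_mul_comp_inner_comp_normSq {x : E} {f'' g'' : ℝ}
    (hf : ∀ᶠ t in 𝓝 ⟪e, x⟫, HasDerivAt f (f' t) t) (hf' : HasDerivAt f' f'' ⟪e, x⟫)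
    (hg : ∀ᶠ s in 𝓝 (‖x‖ ^ 2), HasDerivAt g (g' s) s) (hg' : HasDerivAt g' g'' (‖x‖ ^ 2))
    (v : E) :
    fderiv ℝ (fun z => fderiv ℝ (fun w => f ⟪e, w⟫ * g (‖w‖ ^ 2)) z v) x v =
      f'' * g (‖x‖ ^ 2) * ⟪e, v⟫ ^ 2 + 4 * f' ⟪e, x⟫ * g' (‖x‖ ^ 2) * (⟪e, v⟫ * ⟪x, v⟫)
        + 4 * f ⟪e, x⟫ * g'' * ⟪x, v⟫ ^ 2 + 2 * f ⟪e, x⟫ * g' (‖x‖ ^ 2) * ‖v‖ ^ 2 := by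
  have hinner : ∀ u : E, HasFDerivAt (fun w => ⟪u, w⟫) (innerSL ℝ u) x :=
    fun u => (innerSL ℝ u).hasFDerivAt
  have hnormSq := (hasStrictFDerivAt_norm_sq x).hasFDerivAt
  have hgrad : (fun z => fderiv ℝ (fun w => f ⟪e, w⟫ * g (‖w‖ ^ 2)) z v) =ᶠ[𝓝 x]
      fun z => f' ⟪e, z⟫ * g (‖z‖ ^ 2) * ⟪e, v⟫ + 2 * f ⟪e, z⟫ * g' (‖z‖ ^ 2) * ⟪v, z⟫ := by
    have hf_near := ((innerSL ℝ e).continuous.tendsto x).eventually hf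
    have hg_near := ((continuous_norm.pow 2).tendsto x).eventually hg
    filter_upwards [hf_near, hg_near] with z hfz hgz
    rw [(hasFDerivAt_mul_comp_inner_comp_normSq hfz hgz).fderiv]
    simp only [add_apply, smul_apply, coe_innerSL_apply, smul_eq_mul, real_inner_comm v z]
  have hderiv : HasFDerivAt
      (fun z => f' ⟪e, z⟫ * g (‖z‖ ^ 2) * ⟪e, v⟫ + 2 * f ⟪e, z⟫ * g' (‖z‖ ^ 2) * ⟪v, z⟫) _ x :=
    ((((hf'.comp_hasFDerivAt x (hinner e)).mul
      (hg.self_of_nhds.comp_hasFDerivAt x hnormSq)).mul_const ⟪e, v⟫).add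
    ((((hf.self_of_nhds.comp_hasFDerivAt x (hinner e)).const_mul 2).mul
      (hg'.comp_hasFDerivAt x hnormSq)).mul
      (hinner v)))
  rw [hgrad.fderiv_eq, hderiv.fderiv]
  simp only [Function.comp_apply, smul_add, Pi.mul_apply, add_apply, smul_apply,
    coe_innerSL_apply, nsmul_eq_mul, Nat.cast_ofNat, smul_eq_mul, real_inner_self_eq_norm_sq,
    real_inner_comm x v]
  ring

end ProductRule

theorem Filter.EventuallyEq.lap_eq {N : ℕ} {u v : EuclideanSpace ℝ (Fin N) → ℝ}
    {x : EuclideanSpace ℝ (Fin N)} (h : u =ᶠ[𝓝 x] v) : lap u x = lap v x := by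
  refine Finset.sum_congr rfl fun i _ => ?_
  rw [Filter.EventuallyEq.fderiv_eq (h.fderiv.mono fun z hz => by rw [hz])]

theorem lap_mul_comp_inner_comp_normSq {N : ℕ} {e x : EuclideanSpace ℝ (Fin N)}
    {f f' g g' : ℝ → ℝ} {f'' g'' : ℝ}
    (hf : ∀ᶠ t in 𝓝 ⟪e, x⟫, HasDerivAt f (f' t) t) (hf' : HasDerivAt f' f'' ⟪e, x⟫)
    (hg : ∀ᶠ s in 𝓝 (‖x‖ ^ 2), HasDerivAt g (g' s) s) (hg' : HasDerivAt g' g'' (‖x‖ ^ 2)) :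
    lap (fun w => f ⟪e, w⟫ * g (‖w‖ ^ 2)) x =
      f'' * g (‖x‖ ^ 2) * ‖e‖ ^ 2 + 4 * f' ⟪e, x⟫ * g' (‖x‖ ^ 2) * ⟪e, x⟫
        + 4 * f ⟪e, x⟫ * g'' * ‖x‖ ^ 2 + 2 * f ⟪e, x⟫ * g' (‖x‖ ^ 2) * N := by
  obtain ⟨b, hb⟩ : ∃ b : OrthonormalBasis (Fin N) ℝ (EuclideanSpace ℝ (Fin N)),
      ∀ i, EuclideanSpace.single i 1 = b i :=
    ⟨_, fun i => (EuclideanSpace.basisFun_apply (Fin N) ℝ i).symm⟩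
  have hparseval (u w : EuclideanSpace ℝ (Fin N)) : ∑ i, ⟪u, b i⟫ * ⟪w, b i⟫ = ⟪u, w⟫ := by
    simp_rw [real_inner_comm (b _) w]
    exact b.sum_inner_mul_inner u w
  have hsq (u : EuclideanSpace ℝ (Fin N)) : ∑ i, ⟪u, b i⟫ ^ 2 = ‖u‖ ^ 2 := by
    simp_rw [sq, hparseval, real_inner_self_eq_norm_mul_norm]
  have hunit (i : Fin N) : ‖b i‖ = 1 := b.orthonormal.1 i
  simp only [lap, hb, fderiv_fderiv_mul_comp_inner_comp_normSq hf hf' hg hg',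
    Finset.sum_add_distrib, ← Finset.mul_sum, hparseval, hsq, hunit, one_pow, mul_one,
    Finset.sum_const, Finset.card_univ, Fintype.card_fin, nsmul_eq_mul]
  ring

theorem hasDerivAt_exp_mul_mul_self (K t : ℝ) :
    HasDerivAt (fun t => exp (K * t) * t) (exp (K * t) * (K * t + 1)) t := by
  refine ((((hasDerivAt_id t).const_mul K).exp).mul (hasDerivAt_id t)).congr_deriv ?_
  simp only [id_eq]
  ring

theorem hasDerivAt_exp_mul_mul_mul_add_one (K t : ℝ) :
    HasDerivAt (fun t => exp (K * t) * (K * t + 1)) (exp (K * t) * (K ^ 2 * t + 2 * K)) t := by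
  refine ((((hasDerivAt_id t).const_mul K).exp).mul
    (((hasDerivAt_id t).const_mul K).add_const 1)).congr_deriv ?_
  simp only [id_eq]
  ring

-- `Φ` of the header is `radialFactor (-N / 4) a`, and `radialLogDeriv p a = Φ' / Φ` on `(0, 1)`.
def radialFactor (p a s : ℝ) : ℝ := s ^ p * (-log s / 2) ^ a

def radialLogDeriv (p a s : ℝ) : ℝ := p / s + a / (s * log s)

theorem hasDerivAt_radialFactor {p a s : ℝ} (hs0 : 0 < s) (hs1 : s < 1) :
    HasDerivAt (radialFactor p a) (radialFactor p a s * radialLogDeriv p a s) s := by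
  have hlog : log s < 0 := log_neg hs0 hs1
  have hL : 0 < -log s / 2 := by linarith
  have h := (hasDerivAt_rpow_const (p := p) (Or.inl hs0.ne')).mul
    ((hasDerivAt_rpow_const (p := a) (Or.inl hL.ne')).comp s
      ((hasDerivAt_log hs0.ne').neg.div_const 2))
  refine h.congr_deriv ?_
  simp only [Function.comp_apply, Pi.neg_apply]
  rw [radialFactor, radialLogDeriv, rpow_sub_one hs0.ne', rpow_sub_one hL.ne']
  field_simp

theorem hasDerivAt_radialLogDeriv {p a s : ℝ} (hs0 : 0 < s) (hs1 : s ≠ 1) :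
    HasDerivAt (radialLogDeriv p a) (-p / s ^ 2 - a * (log s + 1) / (s * log s) ^ 2) s := by
  have hlog : log s ≠ 0 := log_ne_zero_of_pos_of_ne_one hs0 hs1
  have h := ((hasDerivAt_id s).inv hs0.ne').const_mul p |>.add
    ((((hasDerivAt_id s).mul (hasDerivAt_log hs0.ne')).inv (mul_ne_zero hs0.ne' hlog)).const_mul a)
  refine (h.congr_deriv ?_).congr_of_eventuallyEq ?_
  · simp only [id_eq, Pi.mul_apply]
    field_simp
    ring
  · filter_upwards with x
    simp [radialLogDeriv, div_eq_mul_inv]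

theorem hasDerivAt_radialFactor_mul_radialLogDeriv {p a s : ℝ} (hs0 : 0 < s) (hs1 : s < 1) :
    HasDerivAt (fun s => radialFactor p a s * radialLogDeriv p a s)
      (radialFactor p a s * (radialLogDeriv p a s ^ 2
        + (-p / s ^ 2 - a * (log s + 1) / (s * log s) ^ 2))) s := by
  refine ((hasDerivAt_radialFactor hs0 hs1).mul
    (hasDerivAt_radialLogDeriv hs0 hs1.ne)).congr_deriv ?_
  ring

theorem omegaAK_eq_of_norm_le_one {N : ℕ} (hN : 2 ≤ N) (a K : ℝ) {z : EuclideanSpace ℝ (Fin N)}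
    (hz : ‖z‖ ≤ 1) :
    omegaAK hN a K z = exp (K * ⟪EuclideanSpace.single ⟨0, by omega⟩ 1, z⟫)
      * ⟪EuclideanSpace.single ⟨0, by omega⟩ 1, z⟫ * radialFactor (-N / 4) a (‖z‖ ^ 2) := by
  have hpow : (‖z‖ ^ 2) ^ (-(N : ℝ) / 4) = ‖z‖ ^ (-(N : ℝ) / 2) := by
    rw [← rpow_natCast, ← rpow_mul (norm_nonneg z)]
    ring_nf
  have hlog : -log (‖z‖ ^ 2) / 2 = |log ‖z‖| := by
    rw [log_pow, abs_of_nonpos (log_nonpos (norm_nonneg z) hz)]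
    ring
  simp only [omegaAK, radialFactor, EuclideanSpace.inner_single_left, map_one, one_mul, hpow, hlog]
  ring

/-- with `L_y = -Δ - (N²/4)|y|⁻² + a(a-1)|y|⁻²|log|y||⁻²` one has
`L_y ω_{a,K} = -(2K/y¹)ω_{a,K} + 2K(N/2 + a|log|y||⁻¹)(y¹/|y|²)ω_{a,K} - K²ω_{a,K}`
on `{y ∈ ℝ^N_+ : 0 < |y| < 1}`. -/
theorem omegaAK_equation (N : ℕ) (hN : 2 ≤ N) (a K : ℝ)
    (y : EuclideanSpace ℝ (Fin N)) (hy1 : 0 < y ⟨0, by omega⟩)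
    (hy0 : 0 < ‖y‖) (hylt : ‖y‖ < 1) :
    -lap (omegaAK hN a K) y - ((N : ℝ)^2/4) * ‖y‖⁻¹^2 * omegaAK hN a K y
      + a * (a - 1) * ‖y‖⁻¹^2 * |Real.log ‖y‖|⁻¹^2 * omegaAK hN a K y
    = -(2*K / y ⟨0, by omega⟩) * omegaAK hN a K y
      + 2*K * ((N : ℝ)/2 + a * |Real.log ‖y‖|⁻¹) * (y ⟨0, by omega⟩ / ‖y‖^2) * omegaAK hN a K y
      - K^2 * omegaAK hN a K y := by
  set e : EuclideanSpace ℝ (Fin N) := EuclideanSpace.single ⟨0, by omega⟩ 1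
  have hs0 : 0 < ‖y‖ ^ 2 := by positivity
  have hs1 : ‖y‖ ^ 2 < 1 := pow_lt_one₀ hy0.le hylt two_ne_zero
  have hω : omegaAK hN a K =ᶠ[𝓝 y]
      fun z => exp (K * ⟪e, z⟫) * ⟪e, z⟫ * radialFactor (-N / 4) a (‖z‖ ^ 2) := by
    filter_upwards [Metric.isOpen_ball.mem_nhds (mem_ball_zero_iff.2 hylt)] with z hz
    exact omegaAK_eq_of_norm_le_one hN a K (mem_ball_zero_iff.1 hz).le
  have hlap := lap_mul_comp_inner_comp_normSq (e := e) (x := y)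
    (f' := fun t => exp (K * t) * (K * t + 1))
    (g' := fun s => radialFactor (-N / 4) a s * radialLogDeriv (-N / 4) a s)
    (.of_forall (hasDerivAt_exp_mul_mul_self K)) (hasDerivAt_exp_mul_mul_mul_add_one K _)
    (eventually_of_mem (Ioo_mem_nhds hs0 hs1) fun s hs => hasDerivAt_radialFactor hs.1 hs.2)
    (hasDerivAt_radialFactor_mul_radialLogDeriv hs0 hs1)
  have he : ‖e‖ = 1 := by simp [e]
  have hey : ⟪e, y⟫ = y ⟨0, by omega⟩ := by simp [e, EuclideanSpace.inner_single_left]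
  have hlog : log ‖y‖ < 0 := log_neg hy0 hylt
  have hy1' : y ⟨0, by omega⟩ ≠ 0 := hy1.ne'
  rw [hω.lap_eq, hlap, hω.self_of_nhds]
  simp only [he, hey, radialLogDeriv, log_pow, Nat.cast_ofNat, abs_of_neg hlog]
  field_simp [hlog.ne]
  ring
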